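/- Let 0 ≤ j ≤ w ≤ k and suppose each φ_l is differentiable with Jacobian φ'_l satisfying ‖φ'_l(y)‖ ≤ 𝔟₀ for all y. Define the matrix J_{w,j} := ( ∏^{↶}_{l=j+1,…,w} V_lᵀ φ'_l(Φ_{l-1}) ) · ( I_{L_{j+1}} ⊗ φ_jᵀ ), where φ_0 := σ_a, φ_j := φ_j(Φ_{j-1}) for j ≥ 1, the arrow denotes the right-to-left ordered matrix product V_wᵀ φ'_w(Φ_{w-1}) ⋯ V_{j+1}ᵀ φ'_{j+1}(Φ_j) (equal to the identity when j = w), and ⊗ is the Kronecker product. Then ‖J_{w,j}‖ ≤ 𝔟₀^{w-j} ( ∏_{l=j+1}^{w} ‖V_l‖ ) · ( 𝔞₁^j ‖σ_a‖ ∏_{i=0}^{j-1} ‖V_i‖ + 𝔞₀ ∑_{i=1}^{j-1} ( 𝔞₁^{j-i} ∏_{l=i}^{j-1} ‖V_l‖ ) + 𝔞₀ ). -/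

import Mathlib

open scoped Matrix Matrix.Norms.L2Operator

/-- The linear map `x ↦ Aᵀ x` on Euclidean spaces, i.e. the action of the (transposed)
weight matrix `A` as in `Φⱼ = Vⱼᵀ φⱼ(Φⱼ₋₁)`. Its operator norm equals the spectral norm of `A`. -/
noncomputable def matCLM {a b : ℕ} (A : Matrix (Fin a) (Fin b) ℝ) :
    EuclideanSpace ℝ (Fin a) →L[ℝ] EuclideanSpace ℝ (Fin b) :=
  LinearMap.toContinuousLinearMap (Matrix.toEuclideanLin Aᵀ)

/-- The layer outputs of a fully-connected feedforward DNN: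
`Φ₀ = V₀ᵀ σₐ` and `Φⱼ = Vⱼᵀ φⱼ(Φⱼ₋₁)`. -/
noncomputable def dnnPhi (L : ℕ → ℕ)
    (V : (j : ℕ) → Matrix (Fin (L j)) (Fin (L (j+1))) ℝ)
    (σa : EuclideanSpace ℝ (Fin (L 0)))
    (φ : (j : ℕ) → EuclideanSpace ℝ (Fin (L j)) → EuclideanSpace ℝ (Fin (L j))) :
    (j : ℕ) → EuclideanSpace ℝ (Fin (L (j+1)))
  | 0 => matCLM (V 0) σa
  | (j+1) => matCLM (V (j+1)) (φ (j+1) (dnnPhi L V σa φ j))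

/-- `phiVec j` is the shorthand `φⱼ`: `φ₀ = σₐ` and `φⱼ = φⱼ(Φⱼ₋₁)` for `j ≥ 1`. -/
noncomputable def phiVec (L : ℕ → ℕ)
    (V : (j : ℕ) → Matrix (Fin (L j)) (Fin (L (j+1))) ℝ)
    (σa : EuclideanSpace ℝ (Fin (L 0)))
    (φ : (j : ℕ) → EuclideanSpace ℝ (Fin (L j)) → EuclideanSpace ℝ (Fin (L j))) :
    (j : ℕ) → EuclideanSpace ℝ (Fin (L j))
  | 0 => σa
  | (j+1) => φ (j+1) (dnnPhi L V σa φ j)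

/-- The right-to-left ordered product `∏↶_{l=j+1}^{w} Vₗᵀ φ'ₗ(Φₗ₋₁)`, as a continuous linear
map `ℝ^{L_{j+1}} → ℝ^{L_{w+1}}`; it is the identity when `w = j` (and junk for `w < j`). -/
noncomputable def ordProd (L : ℕ → ℕ)
    (V : (j : ℕ) → Matrix (Fin (L j)) (Fin (L (j+1))) ℝ)
    (σa : EuclideanSpace ℝ (Fin (L 0)))
    (φ : (j : ℕ) → EuclideanSpace ℝ (Fin (L j)) → EuclideanSpace ℝ (Fin (L j)))
    (j : ℕ) :
    (w : ℕ) → (EuclideanSpace ℝ (Fin (L (j+1))) →L[ℝ] EuclideanSpace ℝ (Fin (L (w+1))))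
  | 0 => if h : j = 0 then by subst h; exact ContinuousLinearMap.id ℝ _ else 0
  | (w+1) =>
      if h : j = w + 1 then by subst h; exact ContinuousLinearMap.id ℝ _
      else ((matCLM (V (w+1))).comp
              (fderiv ℝ (φ (w+1)) (dnnPhi L V σa φ w))).comp (ordProd L V σa φ j w)

/-! Submultiplicativity of the operator norm splits `J_{w,j}` into the ordered product, each of
whose factors `Vₗᵀ φ'ₗ(Φₗ₋₁)` has norm at most `𝔟₀ ‖Vₗ‖`, and the block row `I ⊗ φⱼᵀ`, whose norm
is at most `‖φⱼ‖` by Cauchy–Schwarz applied row by row. The growth bound on the activations gives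
`‖φⱼ₊₁‖ ≤ 𝔞₁ ‖Vⱼ‖ ‖φⱼ‖ + 𝔞₀`, and unrolling this recursion yields the closed form. -/

open Finset

theorem Matrix.l2_opNorm_blockRow_le {ι κ : Type*} [Fintype ι] [Fintype κ] [DecidableEq ι]
    [DecidableEq κ] (c : EuclideanSpace ℝ κ) :
    ‖(Matrix.of fun (i : ι) (p : ι × κ) => if i = p.1 then c p.2 else 0 : Matrix ι (ι × κ) ℝ)‖
      ≤ ‖c‖ := by
  set M : Matrix ι (ι × κ) ℝ := Matrix.of fun i p => if i = p.1 then c p.2 else 0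
  rw [Matrix.l2_opNorm_def]
  refine ContinuousLinearMap.opNorm_le_bound _ (norm_nonneg c) fun x => ?_
  set y := (Matrix.toEuclideanLin.trans LinearMap.toContinuousLinearMap) M x
  have hy : ∀ i, y i = ∑ b, c b * x (i, b) := by
    intro i
    simp [y, M, Matrix.toLpLin_apply, Matrix.mulVec, dotProduct, Fintype.sum_prod_type]
  have hsq : ‖y‖ ^ 2 ≤ (‖c‖ * ‖x‖) ^ 2 := by
    simp only [EuclideanSpace.real_norm_sq_eq, mul_pow, Fintype.sum_prod_type, hy]
    rw [mul_sum]
    exact sum_le_sum fun i _ => sum_mul_sq_le_sq_mul_sq _ _ _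
  exact (pow_le_pow_iff_left₀ (norm_nonneg _) (by positivity) two_ne_zero).mp hsq

theorem norm_matCLM {a b : ℕ} (A : Matrix (Fin a) (Fin b) ℝ) : ‖matCLM A‖ = ‖A‖ := by
  rw [matCLM, ← Matrix.l2_opNorm_conjTranspose A, Matrix.conjTranspose_eq_transpose_of_trivial]
  rfl

-- At `j = 0` this exceeds `s` by `a₀`, so the recursion `B (j+1) = a₁ v j B j + a₀` holds only
-- from `j = 1` on.
noncomputable def phiVecBound (a₀ a₁ s : ℝ) (v : ℕ → ℝ) (j : ℕ) : ℝ :=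
  a₁ ^ j * s * (∏ i ∈ range j, v i)
    + a₀ * ∑ i ∈ Icc 1 (j-1), (a₁ ^ (j - i) * ∏ l ∈ Icc i (j-1), v l)
    + a₀

theorem phiVecBound_one (a₀ a₁ s : ℝ) (v : ℕ → ℝ) :
    phiVecBound a₀ a₁ s v 1 = a₁ * (v 0 * s) + a₀ := by
  simp only [phiVecBound, pow_one, range_one, prod_singleton, tsub_self, Order.lt_one_iff,
    Icc_eq_empty_of_lt, sum_empty, mul_zero, add_zero]
  ring

theorem phiVecBound_succ_succ (a₀ a₁ s : ℝ) (v : ℕ → ℝ) (m : ℕ) :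
    phiVecBound a₀ a₁ s v (m + 2) = a₁ * (v (m+1) * phiVecBound a₀ a₁ s v (m + 1)) + a₀ := by
  have hsum : ∑ i ∈ Icc 1 m, a₁ ^ (m + 2 - i) * ∏ l ∈ Icc i (m+1), v l
      = a₁ * v (m+1) * ∑ i ∈ Icc 1 m, a₁ ^ (m + 1 - i) * ∏ l ∈ Icc i m, v l := by
    rw [mul_sum]
    refine sum_congr rfl fun i hi => ?_
    rw [prod_Icc_succ_top (by grind), show m + 2 - i = m + 1 - i + 1 by grind, pow_succ]
    ring
  simp only [phiVecBound, Nat.add_sub_cancel, show m + 2 - 1 = m + 1 from rfl,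
    prod_range_succ, sum_Icc_succ_top (show 1 ≤ m + 1 by omega), hsum,
    show m + 2 - (m + 1) = 1 by omega, Icc_self, prod_singleton]
  ring

section Network

variable {L : ℕ → ℕ} {V : (j : ℕ) → Matrix (Fin (L j)) (Fin (L (j+1))) ℝ}
  {σa : EuclideanSpace ℝ (Fin (L 0))}
  {φ : (j : ℕ) → EuclideanSpace ℝ (Fin (L j)) → EuclideanSpace ℝ (Fin (L j))}

theorem ordProd_self (j : ℕ) : ordProd L V σa φ j j = ContinuousLinearMap.id ℝ _ := by
  cases j <;> simp [ordProd]

theorem ordProd_succ {j w : ℕ} (hjw : j ≤ w) :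
    ordProd L V σa φ j (w + 1) =
      ((matCLM (V (w+1))).comp (fderiv ℝ (φ (w+1)) (dnnPhi L V σa φ w))).comp
        (ordProd L V σa φ j w) := by
  rw [ordProd, dif_neg (by omega)]

theorem norm_ordProd_le {b : ℝ} (hb : 0 ≤ b) {j w : ℕ} (hjw : j ≤ w)
    (hφ' : ∀ l, j < l → l ≤ w → ∀ y, ‖fderiv ℝ (φ l) y‖ ≤ b) :
    ‖ordProd L V σa φ j w‖ ≤ b ^ (w - j) * ∏ l ∈ Icc (j+1) w, ‖V l‖ := by
  induction w, hjw using Nat.le_induction with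
  | base => simpa [ordProd_self] using ContinuousLinearMap.norm_id_le
  | succ w hjw ih =>
    rw [ordProd_succ hjw]
    calc _ ≤ ‖matCLM (V (w+1))‖ * ‖fderiv ℝ (φ (w+1)) (dnnPhi L V σa φ w)‖ *
            ‖ordProd L V σa φ j w‖ :=
          (ContinuousLinearMap.opNorm_comp_le _ _).trans
            (mul_le_mul_of_nonneg_right (ContinuousLinearMap.opNorm_comp_le _ _) (norm_nonneg _))
      _ ≤ ‖V (w+1)‖ * b * (b ^ (w - j) * ∏ l ∈ Icc (j+1) w, ‖V l‖) := by
          rw [norm_matCLM]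
          gcongr
          · exact hφ' _ (by omega) le_rfl _
          · exact ih fun l h1 h2 => hφ' l h1 (by omega)
      _ = b ^ (w + 1 - j) * ∏ l ∈ Icc (j+1) (w+1), ‖V l‖ := by
          rw [prod_Icc_succ_top (by omega), show w + 1 - j = w - j + 1 by omega, pow_succ]
          ring

theorem dnnPhi_eq_matCLM_phiVec (j : ℕ) :
    dnnPhi L V σa φ j = matCLM (V j) (phiVec L V σa φ j) := by
  cases j <;> rfl

theorem norm_dnnPhi_le (j : ℕ) : ‖dnnPhi L V σa φ j‖ ≤ ‖V j‖ * ‖phiVec L V σa φ j‖ := by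
  rw [dnnPhi_eq_matCLM_phiVec, ← norm_matCLM]
  exact (matCLM (V j)).le_opNorm _

theorem norm_phiVec_succ_le {a₀ a₁ : ℝ} (ha₁ : 0 ≤ a₁) {j : ℕ}
    (hφ : ∀ y, ‖φ (j+1) y‖ ≤ a₁ * ‖y‖ + a₀) :
    ‖phiVec L V σa φ (j+1)‖ ≤ a₁ * (‖V j‖ * ‖phiVec L V σa φ j‖) + a₀ :=
  calc ‖phiVec L V σa φ (j+1)‖ ≤ a₁ * ‖dnnPhi L V σa φ j‖ + a₀ := hφ _
    _ ≤ a₁ * (‖V j‖ * ‖phiVec L V σa φ j‖) + a₀ := by gcongr; exact norm_dnnPhi_le j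

theorem norm_phiVec_le {a₀ a₁ : ℝ} (ha₀ : 0 ≤ a₀) (ha₁ : 0 ≤ a₁) {j : ℕ}
    (hφ : ∀ l, 1 ≤ l → l ≤ j → ∀ y, ‖φ l y‖ ≤ a₁ * ‖y‖ + a₀) :
    ‖phiVec L V σa φ j‖ ≤ phiVecBound a₀ a₁ ‖σa‖ (fun i => ‖V i‖) j := by
  induction j with
  | zero => simpa [phiVecBound, phiVec] using ha₀
  | succ j ih =>
    have step := norm_phiVec_succ_le (L := L) (V := V) (σa := σa) ha₁
      (hφ (j+1) le_add_self le_rfl)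
    rcases j with _ | m
    · simpa [phiVecBound_one, phiVec] using step
    · rw [phiVecBound_succ_succ]
      exact step.trans (by gcongr; exact ih fun l h1 h2 => hφ l h1 (by omega))

end Network

theorem dnn_jacobian_block_norm_bound_general
    (k : ℕ) (L : ℕ → ℕ)
    (V : (j : ℕ) → Matrix (Fin (L j)) (Fin (L (j+1))) ℝ)
    (σa : EuclideanSpace ℝ (Fin (L 0)))
    (φ : (j : ℕ) → EuclideanSpace ℝ (Fin (L j)) → EuclideanSpace ℝ (Fin (L j)))
    (𝔞₀ 𝔞₁ 𝔟₀ : ℝ) (ha0 : 0 < 𝔞₀) (ha1 : 0 ≤ 𝔞₁) (hb0 : 0 < 𝔟₀)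
    (hφ : ∀ l, 1 ≤ l → l ≤ k → ∀ y, ‖φ l y‖ ≤ 𝔞₁ * ‖y‖ + 𝔞₀)
    (hφ' : ∀ l, 1 ≤ l → l ≤ k → ∀ y, ‖fderiv ℝ (φ l) y‖ ≤ 𝔟₀)
    (j w : ℕ) (hjw : j ≤ w) (hwk : w ≤ k) :
    ‖(ordProd L V σa φ j w).comp
        (LinearMap.toContinuousLinearMap (Matrix.toEuclideanLin
          (Matrix.of (fun (i : Fin (L (j+1))) (p : Fin (L (j+1)) × Fin (L j)) =>
            if i = p.1 then phiVec L V σa φ j p.2 else (0 : ℝ)))))‖ ≤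
      𝔟₀ ^ (w - j) * (∏ l ∈ Finset.Icc (j+1) w, ‖V l‖) *
        (𝔞₁ ^ j * ‖σa‖ * (∏ i ∈ Finset.range j, ‖V i‖)
          + 𝔞₀ * ∑ i ∈ Finset.Icc 1 (j-1), (𝔞₁ ^ (j - i) * ∏ l ∈ Finset.Icc i (j-1), ‖V l‖)
          + 𝔞₀) :=
  (ContinuousLinearMap.opNorm_comp_le _ _).trans <| mul_le_mul
    (norm_ordProd_le hb0.le hjw fun l hjl hlw => hφ' l (by omega) (hlw.trans hwk))
    ((Matrix.l2_opNorm_blockRow_le _).trans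
      (norm_phiVec_le ha0.le ha1 fun l h1 hlj => hφ l h1 (by omega)))
    (norm_nonneg _)
    (mul_nonneg (pow_nonneg hb0.le _) (prod_nonneg fun _ _ => norm_nonneg _))

/-- For `0 ≤ j ≤ w ≤ k`, with `‖φ'ₗ(y)‖ ≤ 𝔟₀`, the matrix
`J_{w,j} = (∏↶_{l=j+1}^{w} Vₗᵀ φ'ₗ(Φₗ₋₁)) (I_{L_{j+1}} ⊗ φⱼᵀ)` (acting `ℝ^{L_{j+1}·L_j} → ℝ^{L_{w+1}}`)
satisfies `‖J_{w,j}‖ ≤ 𝔟₀^{w-j} (∏_{l=j+1}^{w} ‖Vₗ‖) (𝔞₁^j ‖σₐ‖ ∏_{i=0}^{j-1} ‖Vᵢ‖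
+ 𝔞₀ ∑_{i=1}^{j-1} (𝔞₁^{j-i} ∏_{l=i}^{j-1} ‖Vₗ‖) + 𝔞₀)`. -/
theorem dnn_jacobian_block_norm_bound
    (k : ℕ) (hk : 1 ≤ k) (L : ℕ → ℕ)
    (V : (j : ℕ) → Matrix (Fin (L j)) (Fin (L (j+1))) ℝ)
    (σa : EuclideanSpace ℝ (Fin (L 0)))
    (φ : (j : ℕ) → EuclideanSpace ℝ (Fin (L j)) → EuclideanSpace ℝ (Fin (L j)))
    (𝔞₀ 𝔞₁ 𝔟₀ : ℝ) (ha0 : 0 < 𝔞₀) (ha1 : 0 ≤ 𝔞₁) (hb0 : 0 < 𝔟₀)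
    (hφdiff : ∀ l, 1 ≤ l → l ≤ k → Differentiable ℝ (φ l))
    (hφ : ∀ l, 1 ≤ l → l ≤ k → ∀ y, ‖φ l y‖ ≤ 𝔞₁ * ‖y‖ + 𝔞₀)
    (hφ' : ∀ l, 1 ≤ l → l ≤ k → ∀ y, ‖fderiv ℝ (φ l) y‖ ≤ 𝔟₀)
    (j w : ℕ) (hjw : j ≤ w) (hwk : w ≤ k) :
    ‖(ordProd L V σa φ j w).comp
        (LinearMap.toContinuousLinearMap (Matrix.toEuclideanLin
          (Matrix.of (fun (i : Fin (L (j+1))) (p : Fin (L (j+1)) × Fin (L j)) =>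
            if i = p.1 then phiVec L V σa φ j p.2 else (0 : ℝ)))))‖ ≤
      𝔟₀ ^ (w - j) * (∏ l ∈ Finset.Icc (j+1) w, ‖V l‖) *
        (𝔞₁ ^ j * ‖σa‖ * (∏ i ∈ Finset.range j, ‖V i‖)
          + 𝔞₀ * ∑ i ∈ Finset.Icc 1 (j-1), (𝔞₁ ^ (j - i) * ∏ l ∈ Finset.Icc i (j-1), ‖V l‖)
          + 𝔞₀) :=
  dnn_jacobian_block_norm_bound_general k L V σa φ 𝔞₀ 𝔞₁ 𝔟₀ ha0 ha1 hb0 hφ hφ' j w hjw hwk
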